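/- arXiv:2511.06539 — 2 statements merged into one kernel-verified Lean document; each statement's English description precedes it below -/
import Mathlib

section
/- For every n ≥ 5, the convex polytope graph R_n'' is d-balanced, i.e., its balanced domination number equals 0. -/
open Finset

open scoped Classical in
noncomputable def closedSum {V : Type*} [Fintype V] (G : SimpleGraph V) (f : V → ℤ) (v : V) : ℤ :=
  f v + ∑ u ∈ Finset.univ.filter (fun u => G.Adj v u), f u

def IsBDF {V : Type*} [Fintype V] (G : SimpleGraph V) (f : V → ℤ) : Prop :=
  (∀ v, f v = -1 ∨ f v = 0 ∨ f v = 1) ∧ ∀ v, closedSum G f v = 0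


/-- The convex polytope graph `R'' n`: six layers a,b,c,d,e,f of `n` vertices with edges
a_i a_{i+1}, f_i f_{i+1}, a_i b_i, b_i c_i, c_i d_i, d_i e_i, e_i f_i,
b_{i+1} c_i, d_i e_{i+1} (indices mod n). -/
def polytopeR'' (n : ℕ) : SimpleGraph (Fin n × Fin 6) :=
  SimpleGraph.fromRel (fun p q =>
    (p.2 = q.2 ∧ ((p.2 : ℕ) = 0 ∨ (p.2 : ℕ) = 5) ∧ (q.1 : ℕ) = ((p.1 : ℕ) + 1) % n) ∨
    ((p.1 = q.1) ∧ (p.2 : ℕ) + 1 = (q.2 : ℕ)) ∨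
    ((p.2 : ℕ) = 2 ∧ (q.2 : ℕ) = 1 ∧ (q.1 : ℕ) = ((p.1 : ℕ) + 1) % n) ∨
    ((p.2 : ℕ) = 3 ∧ (q.2 : ℕ) = 4 ∧ (q.1 : ℕ) = ((p.1 : ℕ) + 1) % n))

/-!
Summing the balance conditions `f[N[v]] = 0` over all vertices of a `k`-regular graph counts every
label `k + 1` times, so `(k + 1) * ∑ v, f v = 0`: every regular graph is d-balanced, the zero
labelling attaining the maximum. It remains to check that `R_n''` is cubic, which is where
`n ≥ 3` enters (for `n ≤ 2` the neighbours `a_{i+1}` and `a_{i-1}` coincide).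
-/

section Regular

variable {V : Type*} [Fintype V] {G : SimpleGraph V} {k : ℕ}

open scoped Classical in
theorem sum_closedSum_of_isRegularOfDegree (hG : G.IsRegularOfDegree k) (f : V → ℤ) :
    ∑ v, closedSum G f v = (k + 1) * ∑ v, f v := by
  have hswap : ∑ v, ∑ u ∈ univ.filter (G.Adj v), f u = ∑ u, (k : ℤ) * f u := by
    simp_rw [sum_filter]
    rw [sum_comm]
    refine sum_congr rfl fun u _ => ?_
    simp_rw [G.adj_comm _ u]
    rw [← sum_filter, sum_const, ← G.neighborFinset_eq_filter, G.card_neighborFinset_eq_degree,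
      hG u, nsmul_eq_mul]
  simp only [closedSum, sum_add_distrib, hswap, ← mul_sum]
  ring

open scoped Classical in
theorem IsBDF.sum_eq_zero_of_isRegularOfDegree (hG : G.IsRegularOfDegree k) {f : V → ℤ}
    (hf : IsBDF G f) : ∑ v, f v = 0 := by
  have h : ((k : ℤ) + 1) * ∑ v, f v = 0 := by
    rw [← sum_closedSum_of_isRegularOfDegree hG, sum_eq_zero fun v _ => hf.2 v]
  exact (mul_eq_zero.mp h).resolve_left (by positivity)

open scoped Classical in
theorem isGreatest_bdfWeight_zero_of_isRegularOfDegree (hG : G.IsRegularOfDegree k) :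
    IsGreatest {w : ℤ | ∃ f : V → ℤ, IsBDF G f ∧ w = ∑ v, f v} 0 := by
  refine ⟨⟨0, ⟨fun _ => Or.inr (Or.inl rfl), fun _ => by simp [closedSum]⟩, by simp⟩, ?_⟩
  rintro w ⟨f, hf, rfl⟩
  exact (hf.sum_eq_zero_of_isRegularOfDegree hG).le

end Regular

theorem Fin.val_eq_add_one_mod_iff {n : ℕ} [NeZero n] {a b : Fin n} :
    (b : ℕ) = ((a : ℕ) + 1) % n ↔ b = a + 1 := by
  rw [Fin.ext_iff, Fin.val_add, Fin.val_one', Nat.add_mod_mod]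

namespace polytopeR''

variable {n : ℕ} [NeZero n]

def neighbors (p : Fin n × Fin 6) : Finset (Fin n × Fin 6) :=
  let i := p.1
  ![{(i + 1, 0), (i - 1, 0), (i, 1)}, {(i, 0), (i, 2), (i - 1, 2)}, {(i, 1), (i + 1, 1), (i, 3)},
    {(i, 2), (i, 4), (i + 1, 4)}, {(i, 3), (i - 1, 3), (i, 5)}, {(i, 4), (i + 1, 5), (i - 1, 5)}]
    p.2

theorem adj_iff_mem_neighbors (h1 : (1 : Fin n) ≠ 0) {p q : Fin n × Fin 6} :
    (polytopeR'' n).Adj p q ↔ q ∈ neighbors p := by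
  obtain ⟨i, j⟩ := p
  obtain ⟨i', j'⟩ := q
  fin_cases j <;> fin_cases j' <;>
    simp [polytopeR'', neighbors, Fin.val_eq_add_one_mod_iff, eq_sub_iff_add_eq] <;> grind

theorem card_neighbors (h1 : (1 : Fin n) ≠ 0) (h2 : (1 + 1 : Fin n) ≠ 0) (p : Fin n × Fin 6) :
    #(neighbors p) = 3 := by
  obtain ⟨i, j⟩ := p
  fin_cases j <;> simp [neighbors, card_insert_of_notMem, h1, h2, eq_sub_iff_add_eq, add_assoc]

end polytopeR''

open scoped Classical in
theorem polytopeR''_isRegularOfDegree_three {n : ℕ} (hn : 3 ≤ n) :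
    (polytopeR'' n).IsRegularOfDegree 3 := by
  have : NeZero n := ⟨by omega⟩
  have h1 : (1 : Fin n) ≠ 0 := by
    simp [Fin.ext_iff, Nat.mod_eq_of_lt (show 1 < n by omega)]
  have h2 : (1 + 1 : Fin n) ≠ 0 := by
    simp [Fin.ext_iff, Fin.val_add, Nat.mod_eq_of_lt (show 1 < n by omega),
      Nat.mod_eq_of_lt (show 2 < n by omega)]
  intro p
  rw [← SimpleGraph.card_neighborFinset_eq_degree, ← polytopeR''.card_neighbors h1 h2 p]
  congr 1
  ext q
  rw [SimpleGraph.mem_neighborFinset, polytopeR''.adj_iff_mem_neighbors h1]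

/-- For every n ≥ 5 the convex polytope graph R_n'' is d-balanced. -/
theorem polytopeR''_d_balanced (n : ℕ) (hn : 5 ≤ n) :
    IsGreatest {w : ℤ | ∃ f : Fin n × Fin 6 → ℤ, IsBDF (polytopeR'' n) f ∧ w = ∑ v, f v} 0 :=
  isGreatest_bdfWeight_zero_of_isRegularOfDegree (polytopeR''_isRegularOfDegree_three (by omega))
end

section
/- Let T be a rooted tree with two levels of descendants, with root having n ≥ 2 children, where the i-th child has l_i leaf children. Let l = |{i : l_i = 2}|. Then T is NOT d-balanced if and only if l = (n−1)/2 and l_i ∈ {0,2} for every i ∈ {1,...,n}. -/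
/-!
A balanced function is fixed on each leaf by its parent, `f (leaf) = -f (aᵢ)`; the conditions at
`aᵢ` and at the root then read `(lᵢ - 1) f(aᵢ) = f(root)` and `f(root) + ∑ f(aᵢ) = 0`, and summing
gives weight `(1 - n) f(root)`. So, as the zero function is balanced, `γ_bd(T) > 0` exactly when
some balanced function has `f(root) = -1`. That forces `f(aᵢ) = -1, lᵢ = 2` or `f(aᵢ) = 1, lᵢ = 0`
for each `i`, and the root condition becomes `n - 2·#{i | lᵢ = 2} = 1`; conversely these values
define a balanced function.
-/

open Finset

/-- Vertices of the depth-two rooted tree: the root, the `n` children of the root,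
and for each child `i` its `l i` leaf children. -/
abbrev TwoLevelVtx (n : ℕ) (l : Fin n → ℕ) : Type :=
  Unit ⊕ Fin n ⊕ (Σ i : Fin n, Fin (l i))

/-- The depth-two rooted tree: root adjacent to each child a_i, and each child a_i
adjacent to its l_i leaves. -/
def twoLevelTree (n : ℕ) (l : Fin n → ℕ) : SimpleGraph (TwoLevelVtx n l) :=
  SimpleGraph.fromRel (fun p q =>
    (p = Sum.inl () ∧ ∃ i : Fin n, q = Sum.inr (Sum.inl i)) ∨
    (∃ (i : Fin n) (j : Fin (l i)), p = Sum.inr (Sum.inl i) ∧ q = Sum.inr (Sum.inr ⟨i, j⟩)))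

theorem isBDF_zero {V : Type*} [Fintype V] (G : SimpleGraph V) : IsBDF G 0 :=
  ⟨fun _ => by simp, fun _ => by simp [closedSum]⟩

theorem Finset.sum_ite_neg_one_one {ι : Type*} [Fintype ι] (p : ι → Prop) [DecidablePred p] :
    ∑ i, (if p i then (-1 : ℤ) else 1) = Fintype.card ι - 2 * #{i | p i} := by
  rw [Finset.sum_ite, Finset.sum_const, Finset.sum_const, ← Finset.card_univ,
    ← Finset.card_filter_add_card_filter_not (s := Finset.univ) p]
  simp only [nsmul_eq_mul]
  push_cast
  ring

namespace TwoLevelTree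

variable {n : ℕ} {l : Fin n → ℕ}

abbrev root : TwoLevelVtx n l := Sum.inl ()
abbrev child (i : Fin n) : TwoLevelVtx n l := Sum.inr (Sum.inl i)
abbrev leaf (i : Fin n) (j : Fin (l i)) : TwoLevelVtx n l := Sum.inr (Sum.inr ⟨i, j⟩)

theorem sum_univ_eq (f : TwoLevelVtx n l → ℤ) :
    ∑ v, f v = f root + ∑ i, f (child i) + ∑ i, ∑ j, f (leaf i j) := by
  rw [Fintype.sum_sum_type, Fintype.sum_sum_type, ← Finset.univ_sigma_univ, Finset.sum_sigma]
  simp [add_assoc]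

open scoped Classical in
theorem closedSum_root (f : TwoLevelVtx n l → ℤ) :
    closedSum (twoLevelTree n l) f root = f root + ∑ i, f (child i) := by
  rw [closedSum, Finset.sum_filter, sum_univ_eq]
  simp [twoLevelTree]

open scoped Classical in
theorem closedSum_child (f : TwoLevelVtx n l → ℤ) (i : Fin n) :
    closedSum (twoLevelTree n l) f (child i) = f (child i) + f root + ∑ j, f (leaf i j) := by
  rw [closedSum, Finset.sum_filter, sum_univ_eq]
  simp [twoLevelTree, add_assoc, ite_and, Finset.sum_ite_irrel]

open scoped Classical in
theorem closedSum_leaf (f : TwoLevelVtx n l → ℤ) (i : Fin n) (j : Fin (l i)) :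
    closedSum (twoLevelTree n l) f (leaf i j) = f (leaf i j) + f (child i) := by
  rw [closedSum, Finset.sum_filter, sum_univ_eq]
  simp [twoLevelTree, ite_and]

theorem sum_leaf_eq {f : TwoLevelVtx n l → ℤ} (hleaf : ∀ i j, f (leaf i j) = -f (child i))
    (i : Fin n) : ∑ j, f (leaf i j) = -(l i * f (child i)) := by
  simp [hleaf]

theorem isBDF_iff {f : TwoLevelVtx n l → ℤ} :
    IsBDF (twoLevelTree n l) f ↔ (∀ v, f v = -1 ∨ f v = 0 ∨ f v = 1) ∧
      f root + ∑ i, f (child i) = 0 ∧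
      (∀ i, ((l i : ℤ) - 1) * f (child i) = f root) ∧
      ∀ i j, f (leaf i j) = -f (child i) := by
  refine and_congr_right fun _ => ⟨fun h => ?_, fun ⟨hroot, hchild, hleaf⟩ => ?_⟩
  · have hleaf : ∀ i j, f (leaf i j) = -f (child i) := fun i j => by
      linarith [closedSum_leaf f i j ▸ h (leaf i j)]
    refine ⟨closedSum_root f ▸ h root, fun i => ?_, hleaf⟩
    linarith [sum_leaf_eq hleaf i ▸ closedSum_child f i ▸ h (child i)]
  · rintro (⟨⟩ | i | ⟨i, j⟩)
    · rw [closedSum_root, hroot]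
    · rw [closedSum_child, sum_leaf_eq hleaf]
      linarith [hchild i]
    · rw [closedSum_leaf, hleaf]
      ring

theorem sum_eq_one_sub_mul_root {f : TwoLevelVtx n l → ℤ} (hf : IsBDF (twoLevelTree n l) f) :
    ∑ v, f v = (1 - n) * f root := by
  obtain ⟨-, hroot, hchild, hleaf⟩ := isBDF_iff.1 hf
  have hchild' : ∀ i, (l i : ℤ) * f (child i) = f root + f (child i) := fun i => by
    linarith [hchild i]
  rw [sum_univ_eq, Finset.sum_congr rfl fun i _ => sum_leaf_eq hleaf i]
  simp only [Finset.sum_neg_distrib, hchild', Finset.sum_add_distrib, Finset.sum_const,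
    Finset.card_univ, Fintype.card_fin, nsmul_eq_mul]
  linarith

theorem exists_isBDF_root_eq_neg_one_iff :
    (∃ f, IsBDF (twoLevelTree n l) f ∧ f root = -1) ↔
      2 * (#{i | l i = 2} : ℤ) = n - 1 ∧ ∀ i, l i = 0 ∨ l i = 2 := by
  constructor
  · rintro ⟨f, hf, hr⟩
    obtain ⟨hval, hroot, hchild, -⟩ := isBDF_iff.1 hf
    have hcases : ∀ i, (l i = 2 ∧ f (child i) = -1) ∨ (l i = 0 ∧ f (child i) = 1) := fun i => by
      have := hchild i
      rcases hval (child i) with h | h | h <;> rw [h] at this ⊢ <;> omega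
    have hsum : ∑ i, f (child i) = ∑ i, if l i = 2 then (-1 : ℤ) else 1 :=
      Finset.sum_congr rfl fun i _ => by rcases hcases i with ⟨h, h'⟩ | ⟨h, h'⟩ <;> simp [h, h']
    refine ⟨?_, fun i => by rcases hcases i with h | h <;> simp [h.1]⟩
    rw [hsum, sum_ite_neg_one_one, Fintype.card_fin, hr] at hroot
    linarith
  · rintro ⟨hcard, hl⟩
    set a : Fin n → ℤ := fun i => if l i = 2 then -1 else 1 with ha
    refine ⟨Sum.elim (fun _ => -1) (Sum.elim a fun p => -a p.1), isBDF_iff.2 ⟨?_, ?_, ?_, ?_⟩, rfl⟩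
    · have ha1 : ∀ i, a i = -1 ∨ a i = 1 := fun i => by
        by_cases h : l i = 2 <;> simp [ha, h]
      rintro (_ | i | ⟨i, _⟩)
      · simp
      all_goals rcases ha1 i with h | h <;> simp [h]
    · simp only [Sum.elim_inl, Sum.elim_inr, ha, sum_ite_neg_one_one, Fintype.card_fin]
      linarith
    · intro i
      rcases hl i with h | h <;> simp [ha, h]
    · intro i j
      rfl

end TwoLevelTree

open TwoLevelTree

open scoped Classical in
/-- A depth-two rooted tree with `n ≥ 2` children of the root is NOT d-balanced iff
the number `l` of children having exactly two leaf children satisfies `l = (n-1)/2`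
and every child has either 0 or 2 leaf children. -/
theorem twoLevelTree_not_d_balanced_iff (n : ℕ) (hn : 2 ≤ n) (l : Fin n → ℕ) :
    ¬ IsGreatest {w : ℤ | ∃ f : TwoLevelVtx n l → ℤ,
        IsBDF (twoLevelTree n l) f ∧ w = ∑ v, f v} 0 ↔
      (2 * (Finset.univ.filter (fun i : Fin n => l i = 2)).card = n - 1 ∧
        ∀ i : Fin n, l i = 0 ∨ l i = 2) := by
  have hn' : (2 : ℤ) ≤ n := by exact_mod_cast hn
  have hcard : 2 * #{i | l i = 2} = n - 1 ↔ 2 * (#{i | l i = 2} : ℤ) = n - 1 := by omega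
  rw [hcard, ← exists_isBDF_root_eq_neg_one_iff]
  constructor
  · intro hnot
    by_contra! hroot
    refine hnot ⟨⟨0, isBDF_zero _, by simp⟩, ?_⟩
    rintro _ ⟨f, hf, rfl⟩
    rw [sum_eq_one_sub_mul_root hf]
    rcases hf.1 root with h | h | h
    · exact absurd h (hroot f hf)
    · simp [h]
    · rw [h]
      linarith
  · rintro ⟨f, hf, hr⟩ ⟨-, hub⟩
    have := hub ⟨f, hf, rfl⟩
    rw [sum_eq_one_sub_mul_root hf, hr] at this
    linarith
end
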